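/- For any vectors v₀, v₁, v₂ ∈ ℝ³ with ‖vᵢ‖₂ ≤ 1 and rᵢ = vᵢ − v_{i+1} − v_{i+2} (indices mod 3), one has Σᵢ₌₀² max(3, ‖rᵢ‖₂) ≤ 11; consequently in the biased 32-Game, p_guess ≤ 1/2 + 11/30 = 13/15 for all quantum (even irreversible) strategies. -/

import Mathlib

open Matrix ComplexOrder

/-!
Summing over Alice's input first, Bob's success probability is
`4/5 + (1/15) ∑_b Re tr (E_b H_b)` with `H_b = ρ_b - 2 ρ_{b+1} - 2 ρ_{b+2}`, a matrix of trace `-3`.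
For `0 ≤ E ≤ 1`, `Re tr (E H)` is at most the sum of the positive eigenvalues of `H`; for a qubit
with eigenvalues `λ₀ + λ₁ = -3` this is `(max 3 R - 3) / 2`, where
`R = |λ₀ - λ₁| = √(2 tr H² - 9)` is the length of the Bloch vector `r_b` of `H_b`.
Purity and overlap bounds for density matrices give `R_b ≤ 5`, and since the cross terms cancel,
`∑_b tr H_b² = 9 ∑_a tr ρ_a²`, whence `∑_b R_b² ≤ 27`. These two constraints force
`∑_b max 3 R_b ≤ 11`. For the vector inequality each `‖v_i - v_{i+1} - v_{i+2}‖ ≤ 3` already.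
-/

lemma two_mul_max_zero_add_max_zero (x y : ℝ) :
    2 * (max 0 x + max 0 y) = x + y + max |x + y| |x - y| := by
  simp only [abs_eq_max_neg, max_def]
  split_ifs <;> linarith

lemma max_three_add_max_three_add_max_three_le {a b c : ℝ}
    (ha5 : a ≤ 5) (hb5 : b ≤ 5) (hc5 : c ≤ 5) (habc : a ^ 2 + b ^ 2 + c ^ 2 ≤ 27) :
    max 3 a + max 3 b + max 3 c ≤ 11 := by
  rcases le_total a 3 with h₁ | h₁ <;> rcases le_total b 3 with h₂ | h₂ <;>
    rcases le_total c 3 with h₃ | h₃ <;>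
    simp only [max_eq_left, max_eq_right, *] <;>
    nlinarith [sq_nonneg (a - b), sq_nonneg (b - c), sq_nonneg (a - c)]

lemma norm_sub_sub_le_three {E : Type*} [SeminormedAddCommGroup E] {x y z : E}
    (hx : ‖x‖ ≤ 1) (hy : ‖y‖ ≤ 1) (hz : ‖z‖ ≤ 1) : ‖x - y - z‖ ≤ 3 :=
  calc ‖x - y - z‖ ≤ ‖x‖ + ‖y‖ + ‖z‖ := (norm_sub_le _ _).trans (by gcongr; exact norm_sub_le _ _)
    _ ≤ 3 := by linarith

namespace Matrix

variable {n : Type*} [Fintype n]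

lemma PosSemidef.re_diag_conj_nonneg {A : Matrix n n ℂ} (hA : A.PosSemidef) (U : Matrix n n ℂ)
    (i : n) : 0 ≤ ((star U * A * U) i i).re :=
  (Complex.nonneg_iff.mp ((hA.conjTranspose_mul_mul_same U).diag_nonneg (i := i))).1

variable [DecidableEq n]

lemma IsHermitian.re_trace_eq_sum_eigenvalues {M : Matrix n n ℂ} (hM : M.IsHermitian) :
    M.trace.re = ∑ i, hM.eigenvalues i := by
  simpa using congrArg Complex.re hM.trace_eq_sum_eigenvalues

lemma IsHermitian.re_trace_mul_eq_sum {M : Matrix n n ℂ} (hM : M.IsHermitian) (B : Matrix n n ℂ) :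
    (B * M).trace.re = ∑ i, ((star (hM.eigenvectorUnitary : Matrix n n ℂ) * B *
      (hM.eigenvectorUnitary : Matrix n n ℂ)) i i).re * hM.eigenvalues i := by
  have hB : (B * M).trace = (star (hM.eigenvectorUnitary : Matrix n n ℂ) * B *
      (hM.eigenvectorUnitary : Matrix n n ℂ) *
        diagonal (RCLike.ofReal ∘ hM.eigenvalues)).trace := by
    conv_lhs => rw [hM.spectral_theorem, Unitary.conjStarAlgAut_apply, ← mul_assoc,
      ← mul_assoc, trace_mul_comm]
    simp only [mul_assoc]
  rw [hB]
  simp [trace, mul_diagonal]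

lemma IsHermitian.re_trace_mul_self {M : Matrix n n ℂ} (hM : M.IsHermitian) :
    (M * M).trace.re = ∑ i, hM.eigenvalues i ^ 2 := by
  rw [hM.re_trace_mul_eq_sum, ← Unitary.conjStarAlgAut_star_apply (S := ℂ),
    hM.conjStarAlgAut_star_eigenvectorUnitary]
  simp [sq]

lemma PosSemidef.re_trace_mul_le_sum_max_zero_eigenvalues {E M : Matrix n n ℂ}
    (hE : E.PosSemidef) (hE' : (1 - E).PosSemidef) (hM : M.IsHermitian) :
    (E * M).trace.re ≤ ∑ i, max 0 (hM.eigenvalues i) := by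
  set U : Matrix n n ℂ := ↑hM.eigenvectorUnitary
  have hdiag_le (i : n) : ((star U * E * U) i i).re ≤ 1 := by
    have h := hE'.re_diag_conj_nonneg U i
    rwa [mul_sub, sub_mul, mul_one, Unitary.star_mul_self_of_mem hM.eigenvectorUnitary.2,
      sub_apply, one_apply_eq, Complex.sub_re, Complex.one_re, sub_nonneg] at h
  rw [hM.re_trace_mul_eq_sum]
  refine Finset.sum_le_sum fun i _ => ?_
  have h0 := hE.re_diag_conj_nonneg U i
  rcases le_total 0 (hM.eigenvalues i) with hsign | hsign
  · rw [max_eq_right hsign]; nlinarith [hdiag_le i]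
  · rw [max_eq_left hsign]; nlinarith

lemma PosSemidef.re_trace_mul_nonneg {A B : Matrix n n ℂ} (hA : A.PosSemidef)
    (hB : B.PosSemidef) : 0 ≤ (A * B).trace.re := by
  rw [hB.1.re_trace_mul_eq_sum]
  exact Finset.sum_nonneg fun i _ =>
    mul_nonneg (hA.re_diag_conj_nonneg _ i) (hB.eigenvalues_nonneg i)

lemma PosSemidef.re_trace_mul_le_one {A B : Matrix n n ℂ} (hA : A.PosSemidef) (hB : B.PosSemidef)
    (hA1 : A.trace = 1) (hB1 : B.trace = 1) : (A * B).trace.re ≤ 1 := by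
  set U : Matrix n n ℂ := ↑hB.1.eigenvectorUnitary
  have hdiag_sum : ∑ i, ((star U * A * U) i i).re = 1 := by
    have h : (star U * A * U).trace = 1 := by
      rw [trace_mul_cycle, Unitary.mul_star_self_of_mem hB.1.eigenvectorUnitary.2, one_mul, hA1]
    simpa [trace] using congrArg Complex.re h
  have heig_sum : ∑ i, hB.1.eigenvalues i = 1 := by
    rw [← hB.1.re_trace_eq_sum_eigenvalues, hB1, Complex.one_re]
  have heig_le (i : n) : hB.1.eigenvalues i ≤ 1 :=
    heig_sum ▸ Finset.single_le_sum (fun j _ => hB.eigenvalues_nonneg j) (Finset.mem_univ i)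
  calc (A * B).trace.re = ∑ i, ((star U * A * U) i i).re * hB.1.eigenvalues i :=
        hB.1.re_trace_mul_eq_sum A
    _ ≤ ∑ i, ((star U * A * U) i i).re :=
        Finset.sum_le_sum fun i _ => mul_le_of_le_one_right (hA.re_diag_conj_nonneg U i) (heig_le i)
    _ = 1 := hdiag_sum

lemma IsHermitian.two_mul_re_trace_mul_self_sub_sq {M : Matrix (Fin 2) (Fin 2) ℂ}
    (hM : M.IsHermitian) :
    2 * (M * M).trace.re - M.trace.re ^ 2 = (hM.eigenvalues 0 - hM.eigenvalues 1) ^ 2 := by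
  rw [hM.re_trace_mul_self, hM.re_trace_eq_sum_eigenvalues, Fin.sum_univ_two, Fin.sum_univ_two]
  ring

lemma PosSemidef.two_mul_re_trace_mul_le {E M : Matrix (Fin 2) (Fin 2) ℂ}
    (hE : E.PosSemidef) (hE' : (1 - E).PosSemidef) (hM : M.IsHermitian) :
    2 * (E * M).trace.re ≤
      M.trace.re + max |M.trace.re| √(2 * (M * M).trace.re - M.trace.re ^ 2) := by
  have h := hE.re_trace_mul_le_sum_max_zero_eigenvalues hE' hM
  rw [Fin.sum_univ_two] at h
  rw [hM.two_mul_re_trace_mul_self_sub_sq, Real.sqrt_sq_eq_abs, hM.re_trace_eq_sum_eigenvalues,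
    Fin.sum_univ_two, ← two_mul_max_zero_add_max_zero]
  linarith

end Matrix

section Game

variable {n : Type*}

/-- Fifteen times the Helstrom operator `p(b,b) ρ_b - ∑_{a ≠ b} p(a,b) ρ_a` of Bob's binary test
"is `a = b`?". -/
def helstromMatrix {α : Type*} [AddCommGroup α] (ρ : Fin 3 → α) (b : Fin 3) : α :=
  ρ b - 2 • ρ (b + 1) - 2 • ρ (b + 2)

lemma isHermitian_helstromMatrix {ρ : Fin 3 → Matrix n n ℂ} (hρ : ∀ a, (ρ a).IsHermitian)
    (b : Fin 3) : (helstromMatrix ρ b).IsHermitian :=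
  ((hρ b).sub ((hρ _).smul (IsSelfAdjoint.all 2))).sub ((hρ _).smul (IsSelfAdjoint.all 2))

variable [Fintype n]

lemma trace_sub_two_smul_sub_two_smul_mul_self {α : Type*} [CommRing α]
    (A B C : Matrix n n α) :
    ((A - 2 • B - 2 • C) * (A - 2 • B - 2 • C)).trace =
      (A * A).trace + 4 * (B * B).trace + 4 * (C * C).trace
        - 4 * (A * B).trace - 4 * (A * C).trace + 8 * (B * C).trace := by
  simp only [sub_mul, mul_sub, smul_mul_assoc, mul_smul_comm, trace_sub, trace_smul,
    trace_mul_comm B A, trace_mul_comm C A, trace_mul_comm C B, nsmul_eq_mul]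
  push_cast
  ring

lemma sum_trace_helstromMatrix_mul_self {α : Type*} [CommRing α] (ρ : Fin 3 → Matrix n n α) :
    ∑ b, (helstromMatrix ρ b * helstromMatrix ρ b).trace = 9 * ∑ a, (ρ a * ρ a).trace := by
  simp only [helstromMatrix, trace_sub_two_smul_sub_two_smul_mul_self, Fin.sum_univ_three]
  simp only [Fin.reduceAdd, trace_mul_comm (ρ 1) (ρ 0), trace_mul_comm (ρ 2) (ρ 0),
    trace_mul_comm (ρ 2) (ρ 1)]
  ring

lemma trace_helstromMatrix {α : Type*} [CommRing α] {ρ : Fin 3 → Matrix n n α}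
    (htr : ∀ a, (ρ a).trace = 1) (b : Fin 3) : (helstromMatrix ρ b).trace = -3 := by
  simp only [helstromMatrix, trace_sub, trace_smul, htr]
  norm_num

variable [DecidableEq n]

lemma re_trace_helstromMatrix_mul_self_le {ρ : Fin 3 → Matrix n n ℂ}
    (hρ : ∀ a, (ρ a).PosSemidef) (htr : ∀ a, (ρ a).trace = 1) (b : Fin 3) :
    (helstromMatrix ρ b * helstromMatrix ρ b).trace.re ≤ 17 := by
  have hpure (a : Fin 3) := (hρ a).re_trace_mul_le_one (hρ a) (htr a) (htr a)
  rw [helstromMatrix, trace_sub_two_smul_sub_two_smul_mul_self]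
  simp only [Complex.add_re, Complex.sub_re, Complex.mul_re, Complex.re_ofNat, Complex.im_ofNat,
    zero_mul, sub_zero]
  linarith [hpure b, hpure (b + 1), hpure (b + 2), (hρ b).re_trace_mul_nonneg (hρ (b + 1)),
    (hρ b).re_trace_mul_nonneg (hρ (b + 2)),
    (hρ (b + 1)).re_trace_mul_le_one (hρ (b + 2)) (htr _) (htr _)]

lemma sum_re_trace_helstromMatrix_mul_self_le {ρ : Fin 3 → Matrix n n ℂ}
    (hρ : ∀ a, (ρ a).PosSemidef) (htr : ∀ a, (ρ a).trace = 1) :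
    ∑ b, (helstromMatrix ρ b * helstromMatrix ρ b).trace.re ≤ 27 := by
  rw [← Complex.re_sum, sum_trace_helstromMatrix_mul_self, Fin.sum_univ_three]
  simp only [Complex.add_re, Complex.mul_re, Complex.re_ofNat, Complex.im_ofNat, zero_mul,
    sub_zero]
  linarith [(hρ 0).re_trace_mul_le_one (hρ 0) (htr 0) (htr 0),
    (hρ 1).re_trace_mul_le_one (hρ 1) (htr 1) (htr 1),
    (hρ 2).re_trace_mul_le_one (hρ 2) (htr 2) (htr 2)]

lemma guessing_probability_eq (ρ E : Fin 3 → Matrix n n ℂ) (htr : ∀ a, (ρ a).trace = 1) :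
    ∑ a : Fin 3, ∑ b : Fin 3, (if a = b then (1 / 15 : ℝ) else 2 / 15) *
        (if a = b then (E b * ρ a).trace.re else ((1 - E b) * ρ a).trace.re)
      = 4 / 5 + 1 / 15 * ∑ b, (E b * helstromMatrix ρ b).trace.re := by
  have hcompl (a b : Fin 3) : ((1 - E b) * ρ a).trace.re = 1 - (E b * ρ a).trace.re := by
    rw [sub_mul, one_mul, trace_sub, htr, Complex.sub_re, Complex.one_re]
  simp only [Fin.sum_univ_three, helstromMatrix, two_nsmul, mul_sub, mul_add, trace_sub, trace_add,
    Complex.sub_re, Complex.add_re, hcompl]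
  simp only [↓reduceIte, one_div, Fin.isValue, zero_ne_one, Fin.reduceEq, one_ne_zero, zero_add,
    Fin.reduceAdd]
  ring

end Game

/-- For unit-ball vectors v₀,v₁,v₂ ∈ ℝ³ with rᵢ = vᵢ − v_{i+1} − v_{i+2}
(indices mod 3), Σᵢ max(3, ‖rᵢ‖) ≤ 11; consequently, in the biased 32-Game
(prior 1/15 on a=b, 2/15 on a≠b), every quantum (even irreversible) strategy —
Alice sending density matrices ρ_a, Bob measuring POVM elements 0 ≤ E_b ≤ I —
guesses correctly with probability at most 1/2 + 11/30 = 13/15. -/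
theorem stmt_19 :
    (∀ v : Fin 3 → EuclideanSpace ℝ (Fin 3), (∀ i, ‖v i‖ ≤ 1) →
      (∑ i : Fin 3, max 3 ‖v i - v (i + 1) - v (i + 2)‖) ≤ 11) ∧
    (∀ ρ : Fin 3 → Matrix (Fin 2) (Fin 2) ℂ,
      (∀ i, (ρ i).PosSemidef) → (∀ i, (ρ i).trace = 1) →
      ∀ E : Fin 3 → Matrix (Fin 2) (Fin 2) ℂ,
      (∀ b, (E b).PosSemidef) → (∀ b, (1 - E b).PosSemidef) →
      (∑ a : Fin 3, ∑ b : Fin 3,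
          (if a = b then (1 / 15 : ℝ) else 2 / 15) *
            (if a = b then (E b * ρ a).trace.re else ((1 - E b) * ρ a).trace.re))
        ≤ 1 / 2 + 11 / 30) := by
  refine ⟨fun v hv => ?_, fun ρ hρ htr E hE hE' => ?_⟩
  · calc ∑ i : Fin 3, max 3 ‖v i - v (i + 1) - v (i + 2)‖ = ∑ _i : Fin 3, (3 : ℝ) :=
          Finset.sum_congr rfl fun i _ => max_eq_left (norm_sub_sub_le_three (hv _) (hv _) (hv _))
      _ ≤ 11 := by norm_num
  set H := helstromMatrix ρ
  have hH (b : Fin 3) : (H b).IsHermitian := isHermitian_helstromMatrix (fun a => (hρ a).1) b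
  have htrH (b : Fin 3) : (H b).trace.re = -3 := by rw [trace_helstromMatrix htr]; norm_num
  set R : Fin 3 → ℝ := fun b => √(2 * (H b * H b).trace.re - 9)
  have hR_sq (b : Fin 3) : R b ^ 2 = 2 * (H b * H b).trace.re - 9 := by
    have h := (hH b).two_mul_re_trace_mul_self_sub_sq
    rw [htrH, neg_sq, show (3 : ℝ) ^ 2 = 9 by norm_num] at h
    exact Real.sq_sqrt (by rw [h]; positivity)
  have hR_le (b : Fin 3) : R b ≤ 5 := by
    nlinarith [hR_sq b, re_trace_helstromMatrix_mul_self_le hρ htr b, Real.sqrt_nonneg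
      (2 * (H b * H b).trace.re - 9)]
  have hguess (b : Fin 3) : 2 * (E b * H b).trace.re ≤ max 3 (R b) - 3 := by
    have h := (hE b).two_mul_re_trace_mul_le (hE' b) (hH b)
    rw [htrH, abs_neg, abs_of_pos three_pos, neg_sq, show (3 : ℝ) ^ 2 = 9 by norm_num] at h
    linarith
  have hsum := sum_re_trace_helstromMatrix_mul_self_le hρ htr
  rw [Fin.sum_univ_three] at hsum
  have h11 := max_three_add_max_three_add_max_three_le (hR_le 0) (hR_le 1) (hR_le 2)
    (by linarith [hR_sq 0, hR_sq 1, hR_sq 2])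
  rw [guessing_probability_eq ρ E htr, Fin.sum_univ_three]
  linarith [hguess 0, hguess 1, hguess 2]
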